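/- arXiv:1112.6072 — 6 statements merged into one kernel-verified Lean document; each statement's English description precedes it below -/
import Mathlib

section
/- For an n×n matrix A = [a b c d x^T; y1 y2 y3 y4 Z] (first row with scalars a,b,c,d followed by row vector x^T, remaining columns y1,y2,y3,y4 and block Z), the permanent satisfies per(A) = per([a·y2+b·y1, y3, y4, Z]) + per([y1, y2, c·y4+d·y3, Z]) + per([0 0 0 0 x^T; y1 y2 y3 y4 Z]). -/
open Matrix Finset

/-!
Expand `per A` along its first row: `per A = ∑ⱼ A₀ⱼ · per Mⱼ`, where `Mⱼ` deletes row `0` and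
column `j`. The terms with `j ≥ 4` form the first-row expansion of the third matrix. The minors
`M₀` and `M₁` differ only in their column `0` (`y₂` resp. `y₁`), so by linearity of the permanent
in that column `a · per M₀ + b · per M₁` is the permanent of the first matrix; likewise `M₂` and
`M₃` differ only in their column `2` (`y₄` resp. `y₃`), which gives the second matrix.
-/

namespace Matrix

variable {R : Type*} [CommSemiring R]

theorem permanent_updateCol_add {m : Type*} [DecidableEq m] [Fintype m]
    (M : Matrix m m R) (j : m) (u v : m → R) :
    (M.updateCol j (u + v)).permanent
      = (M.updateCol j u).permanent + (M.updateCol j v).permanent := by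
  simp only [permanent, ← sum_add_distrib, ← mul_prod_erase _ _ (mem_univ j), updateCol_self,
    Pi.add_apply, add_mul]
  refine sum_congr rfl fun σ _ => ?_
  congr 2 <;> refine prod_congr rfl fun i hi => ?_ <;>
    simp only [updateCol_ne (ne_of_mem_erase hi)]

theorem permanent_succ_column_zero {n : ℕ} (A : Matrix (Fin (n + 1)) (Fin (n + 1)) R) :
    A.permanent = ∑ i : Fin (n + 1), A i 0 * (A.submatrix i.succAbove Fin.succ).permanent := by
  -- `decomposeFin` splits a permutation into its value at `0` and a permutation of the rest;
  -- for the value `i.succ`, `cycleRange` reindexes the rest as a permutation of the minor.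
  rw [permanent, univ_perm_fin_succ, ← univ_product_univ]
  simp only [sum_map, Equiv.toEmbedding_apply, sum_product]
  refine sum_congr rfl fun i _ => Fin.cases ?_ (fun i => ?_) i
  · simp only [permanent, mul_sum]
    refine sum_congr rfl fun σ _ => ?_
    rw [Fin.prod_univ_succ]
    simp [Equiv.Perm.decomposeFin_symm_apply_zero, Equiv.Perm.decomposeFin_symm_apply_succ]
  · rw [← permanent_permute_cols i.cycleRange (A.submatrix i.succ.succAbove Fin.succ),
      permanent, mul_sum]
    refine sum_congr rfl fun σ _ => ?_
    rw [Fin.prod_univ_succ]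
    simp [Equiv.Perm.decomposeFin_symm_apply_zero, Equiv.Perm.decomposeFin_symm_apply_succ,
      ← Fin.succAbove_cycleRange]

theorem permanent_succ_row_zero {n : ℕ} (A : Matrix (Fin (n + 1)) (Fin (n + 1)) R) :
    A.permanent = ∑ j : Fin (n + 1), A 0 j * (A.submatrix Fin.succ j.succAbove).permanent := by
  rw [← permanent_transpose, permanent_succ_column_zero]
  simp only [transpose_apply, ← transpose_submatrix, permanent_transpose]

theorem permanent_updateRow_zero_eq_sum {n : ℕ} (A : Matrix (Fin (n + 1)) (Fin (n + 1)) R)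
    (v : Fin (n + 1) → R) :
    (A.updateRow 0 v).permanent = ∑ j, v j * (A.submatrix Fin.succ j.succAbove).permanent := by
  rw [permanent_succ_row_zero]
  simp only [updateRow_self, ← Fin.succAbove_zero, submatrix_updateRow_succAbove]

theorem updateCol_submatrix_succAbove_castSucc {m α : Type*} {k : ℕ}
    (B : Matrix m (Fin (k + 2)) α) (j : Fin (k + 1)) :
    (B.submatrix id j.castSucc.succAbove).updateCol j (fun i => B i j.castSucc)
      = B.submatrix id j.succ.succAbove := by
  ext i l
  rcases lt_trichotomy l j with hlt | rfl | hgt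
  · simp [updateCol_ne hlt.ne, Fin.succAbove_castSucc_of_lt _ _ hlt,
      Fin.succAbove_succ_of_le _ _ hlt.le]
  · simp
  · simp [updateCol_ne hgt.ne', Fin.succAbove_castSucc_of_le _ _ hgt.le,
      Fin.succAbove_succ_of_lt _ _ hgt]

theorem permanent_updateCol_submatrix_succAbove_castSucc {k : ℕ}
    (B : Matrix (Fin (k + 1)) (Fin (k + 2)) R) (j : Fin (k + 1)) (a b : R) :
    ((B.submatrix id j.castSucc.succAbove).updateCol j
        (a • (fun i => B i j.succ) + b • (fun i => B i j.castSucc))).permanent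
      = a * (B.submatrix id j.castSucc.succAbove).permanent
        + b * (B.submatrix id j.succ.succAbove).permanent := by
  have own_column :
      (fun i => B i j.succ) = fun i => B.submatrix id j.castSucc.succAbove i j := by
    simp
  rw [permanent_updateCol_add, permanent_updateCol_smul, permanent_updateCol_smul, own_column,
    updateCol_eq_self, updateCol_submatrix_succAbove_castSucc]

end Matrix

theorem Fin.sum_univ_eq_first_four_add_rest {M : Type*} [AddCommMonoid M] {k : ℕ}
    (f : Fin (k + 4) → M) :
    ∑ j, f j = f 0 + f 1 + f 2 + f 3 + ∑ j : Fin (k + 4), if (j : ℕ) < 4 then 0 else f j := by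
  have succ_two : (2 : Fin (k + 3)).succ = 3 := rfl
  simp only [Fin.sum_univ_succ (n := k + 3), Fin.sum_univ_succ (n := k + 2),
    Fin.sum_univ_succ (n := k + 1), Fin.sum_univ_succ (n := k)]
  simp (disch := omega) [succ_two, Nat.mod_eq_of_lt, add_assoc]

section HybridExpansion

variable {n : ℕ} {R : Type*} [CommSemiring R] (A : Matrix (Fin (n + 5)) (Fin (n + 5)) R)

theorem permanent_combine_columns_zero_one :
    (Matrix.of fun i j : Fin (n + 4) =>
        if (j : ℕ) = 0 then A 0 0 * A i.succ 1 + A 0 1 * A i.succ 0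
        else A i.succ j.succ).permanent
      = A 0 0 * (A.submatrix Fin.succ (Fin.succAbove 0)).permanent
        + A 0 1 * (A.submatrix Fin.succ (Fin.succAbove 1)).permanent := by
  refine (congrArg permanent ?_).trans
    ((A.submatrix Fin.succ id).permanent_updateCol_submatrix_succAbove_castSucc 0 _ _)
  ext i j
  by_cases hj : j = 0
  · subst hj; simp
  · simp [hj, Fin.val_eq_zero_iff]

theorem permanent_combine_columns_two_three :
    (Matrix.of fun i j : Fin (n + 4) =>
        if (j : ℕ) = 2 then A 0 2 * A i.succ 3 + A 0 3 * A i.succ 2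
        else if (j : ℕ) < 2 then A i.succ (j.castSucc)
        else A i.succ j.succ).permanent
      = A 0 2 * (A.submatrix Fin.succ (Fin.succAbove 2)).permanent
        + A 0 3 * (A.submatrix Fin.succ (Fin.succAbove 3)).permanent := by
  have castSucc_two : (2 : Fin (n + 4)).castSucc = 2 := rfl
  have succ_two : (2 : Fin (n + 4)).succ = 3 := rfl
  refine (congrArg permanent ?_).trans
    ((A.submatrix Fin.succ id).permanent_updateCol_submatrix_succAbove_castSucc 2 _ _)
  ext i j
  rcases lt_trichotomy j 2 with hlt | rfl | hgt
  · have hj : (j : ℕ) < 2 := hlt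
    simp [updateCol_ne hlt.ne, Fin.succAbove_castSucc_of_lt _ _ hlt, hj.ne,
      show (j : ℕ) ≤ 1 by omega]
  · simp [castSucc_two, succ_two]
  · have hj : 2 < (j : ℕ) := hgt
    simp [updateCol_ne hgt.ne', Fin.succAbove_castSucc_of_le _ _ hgt.le, hj.ne',
      show ¬(j : ℕ) ≤ 1 by omega]

theorem permanent_zero_first_four_of_row_zero :
    (Matrix.of fun i j : Fin (n + 5) => if i = 0 ∧ (j : ℕ) < 4 then 0 else A i j).permanent
      = ∑ j : Fin (n + 5),
          if (j : ℕ) < 4 then 0 else A 0 j * (A.submatrix Fin.succ j.succAbove).permanent := by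
  have zero_head :
      (Matrix.of fun i j : Fin (n + 5) => if i = 0 ∧ (j : ℕ) < 4 then 0 else A i j)
        = A.updateRow 0 fun j => if (j : ℕ) < 4 then 0 else A 0 j := by
    ext i j
    by_cases hi : i = 0
    · subst hi; simp
    · simp [hi]
  simp only [zero_head, permanent_updateRow_zero_eq_sum, ite_mul, zero_mul]

end HybridExpansion

/-- Expansion (2): for an `(n+5)×(n+5)` matrix `A` with first row
`(a, b, c, d, xᵀ)` and remaining rows forming columns `y₁ y₂ y₃ y₄` and block `Z`,
`per A = per [a·y₂+b·y₁, y₃, y₄, Z] + per [y₁, y₂, c·y₄+d·y₃, Z] + per [0 0 0 0 xᵀ; y₁ y₂ y₃ y₄ Z]`. -/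
theorem permanent_hybrid_expansion {n : ℕ} {R : Type*} [CommRing R]
    (A : Matrix (Fin (n + 5)) (Fin (n + 5)) R) :
    A.permanent =
      (Matrix.of fun i j : Fin (n + 4) =>
          if (j : ℕ) = 0 then A 0 0 * A i.succ 1 + A 0 1 * A i.succ 0
          else A i.succ j.succ).permanent +
      (Matrix.of fun i j : Fin (n + 4) =>
          if (j : ℕ) = 2 then A 0 2 * A i.succ 3 + A 0 3 * A i.succ 2
          else if (j : ℕ) < 2 then A i.succ (j.castSucc)
          else A i.succ j.succ).permanent +
      (Matrix.of fun i j : Fin (n + 5) =>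
          if i = 0 ∧ (j : ℕ) < 4 then 0 else A i j).permanent := by
  rw [permanent_succ_row_zero A, Fin.sum_univ_eq_first_four_add_rest,
    permanent_combine_columns_zero_one, permanent_combine_columns_two_three,
    permanent_zero_first_four_of_row_zero]
  abel
end

section
/- The KKLLL estimator is unbiased: if A is an n×n 0-1 matrix and B is the random matrix with B_{ij} = 0 when a_{ij} = 0 and B_{ij} chosen independently and uniformly from {1, ω, ω²} (the cube roots of unity) when a_{ij} = 1, then E[det(B)·conj(det(B))] = per(A). -/
open Matrix Finset Complex

/-- The KKLLL estimator is unbiased: replacing each `1`-entry of a 0-1 matrix `A`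
independently by a uniformly random cube root of unity yields a random matrix `B`
with `E[det B * conj (det B)] = per A`. The expectation is the average over all
choices `f : Fin n → Fin n → Fin 3`, with `B f i j = A i j * ω ^ (f i j)` where
`ω = e^{2πi/3}`. -/
theorem kklll_estimator_unbiased {n : ℕ} (A : Matrix (Fin n) (Fin n) ℂ)
    (hA : ∀ i j, A i j = 0 ∨ A i j = 1) :
    ((3 : ℂ) ^ (n * n))⁻¹ *
        ∑ f : Fin n → Fin n → Fin 3,
          (Matrix.of fun i j =>
              A i j * Complex.exp (2 * Real.pi * Complex.I / 3) ^ ((f i j : ℕ))).det *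
            (starRingEnd ℂ)
              ((Matrix.of fun i j =>
                  A i j * Complex.exp (2 * Real.pi * Complex.I / 3) ^ ((f i j : ℕ))).det) =
      A.permanent := by
  classical
  set ω : ℂ := Complex.exp (2 * Real.pi * Complex.I / 3) with hωdef
  have hprim : IsPrimitiveRoot ω 3 := by
    have h := Complex.isPrimitiveRoot_exp 3 (by norm_num)
    norm_num at h
    exact h
  have hω3 : ω ^ 3 = 1 := hprim.pow_eq_one
  have hωne : ω ≠ 1 := hprim.ne_one (by norm_num)
  have hconjω : (starRingEnd ℂ) ω = Complex.exp (-(2 * Real.pi * Complex.I / 3)) := by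
    rw [hωdef, ← Complex.exp_conj]
    congr 1
    simp only [map_div₀, _root_.map_mul, Complex.conj_I, Complex.conj_ofReal, map_ofNat]
    ring
  have hωconj : ω * (starRingEnd ℂ) ω = 1 := by
    rw [hconjω, hωdef, ← Complex.exp_add]
    simp
  -- key computation for a fixed pair of permutations
  have key : ∀ σ τ : Equiv.Perm (Fin n),
      (∑ f : Fin n → Fin n → Fin 3,
        (∏ i, A (σ i) i * ω ^ ((f (σ i) i : ℕ))) *
          (starRingEnd ℂ) (∏ i, A (τ i) i * ω ^ ((f (τ i) i : ℕ)))) =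
      if σ = τ then (3 : ℂ) ^ (n * n) * ∏ i, A (σ i) i else 0 := by
    intro σ τ
    by_cases hστ : σ = τ
    · subst hστ
      rw [if_pos rfl]
      have hterm : ∀ f : Fin n → Fin n → Fin 3,
          (∏ i, A (σ i) i * ω ^ ((f (σ i) i : ℕ))) *
            (starRingEnd ℂ) (∏ i, A (σ i) i * ω ^ ((f (σ i) i : ℕ))) =
          ∏ i, A (σ i) i := by
        intro f
        rw [map_prod, ← Finset.prod_mul_distrib]
        refine Finset.prod_congr rfl fun i _ => ?_
        rcases hA (σ i) i with h | h
        · simp [h]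
        · rw [h, one_mul, map_pow, ← mul_pow, hωconj, one_pow]
      rw [Finset.sum_congr rfl fun f _ => hterm f]
      rw [Finset.sum_const, Finset.card_univ, nsmul_eq_mul]
      congr 1
      rw [Fintype.card_fun, Fintype.card_fun, Fintype.card_fin, Fintype.card_fin]
      push_cast
      rw [← pow_mul]
    · rw [if_neg hστ]
      obtain ⟨i₀, hi₀⟩ : ∃ i, σ i ≠ τ i := by
        by_contra h
        push_neg at h
        exact hστ (Equiv.ext h)
      set T : (Fin n → Fin n → Fin 3) → ℂ := fun f =>
        (∏ i, A (σ i) i * ω ^ ((f (σ i) i : ℕ))) *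
          (starRingEnd ℂ) (∏ i, A (τ i) i * ω ^ ((f (τ i) i : ℕ))) with hT
      set e : (Fin n → Fin n → Fin 3) ≃ (Fin n → Fin n → Fin 3) :=
        Equiv.piCongrRight fun p => Equiv.piCongrRight fun q =>
          if p = σ i₀ ∧ q = i₀ then Equiv.addRight 1 else Equiv.refl _ with he
      have happ : ∀ (f : Fin n → Fin n → Fin 3) p q,
          e f p q = if p = σ i₀ ∧ q = i₀ then f p q + 1 else f p q := by
        intro f p q
        simp only [he, Equiv.piCongrRight_apply, Pi.map_apply]
        split_ifs <;> rfl
      have hstep : ∀ f, T (e f) = ω * T f := by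
        intro f
        have h1 : (∏ i, A (σ i) i * ω ^ ((e f (σ i) i : ℕ))) =
            ω * ∏ i, A (σ i) i * ω ^ ((f (σ i) i : ℕ)) := by
          rw [← Finset.mul_prod_erase univ _ (mem_univ i₀),
            ← Finset.mul_prod_erase univ (fun i => A (σ i) i * ω ^ ((f (σ i) i : ℕ)))
              (mem_univ i₀)]
          have h2 : ∀ i ∈ univ.erase i₀,
              A (σ i) i * ω ^ ((e f (σ i) i : ℕ)) =
              A (σ i) i * ω ^ ((f (σ i) i : ℕ)) := by
            intro i hi
            have hne : i ≠ i₀ := (Finset.mem_erase.mp hi).1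
            rw [happ, if_neg (fun hc => hne hc.2)]
          rw [Finset.prod_congr rfl h2, happ, if_pos ⟨rfl, rfl⟩]
          have h3 : ((f (σ i₀) i₀ + 1 : Fin 3) : ℕ) = ((f (σ i₀) i₀ : ℕ) + 1) % 3 := by
            simp [Fin.val_add]
          rw [h3, ← pow_eq_pow_mod _ hω3, pow_succ]
          ring
        have h4 : (∏ i, A (τ i) i * ω ^ ((e f (τ i) i : ℕ))) =
            ∏ i, A (τ i) i * ω ^ ((f (τ i) i : ℕ)) := by
          refine Finset.prod_congr rfl fun i _ => ?_
          rw [happ, if_neg]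
          rintro ⟨h5, rfl⟩
          exact hi₀ h5.symm
        simp only [hT]
        rw [h1, h4]
        ring
      have hsum : ∑ f, T f = ω * ∑ f, T f := by
        rw [Finset.mul_sum]
        exact (Equiv.sum_comp e T).symm.trans (Finset.sum_congr rfl fun f _ => hstep f)
      have h6 : (1 - ω) * ∑ f, T f = 0 := by
        rw [sub_mul, one_mul]
        exact sub_eq_zero_of_eq hsum
      rcases mul_eq_zero.mp h6 with h | h
      · exact absurd (sub_eq_zero.mp h).symm hωne
      · exact h
  -- expand determinants
  have expand : ∀ f : Fin n → Fin n → Fin 3,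
      (Matrix.of fun i j => A i j * ω ^ ((f i j : ℕ))).det *
        (starRingEnd ℂ) ((Matrix.of fun i j => A i j * ω ^ ((f i j : ℕ))).det) =
      ∑ σ : Equiv.Perm (Fin n), ∑ τ : Equiv.Perm (Fin n),
        (((Equiv.Perm.sign σ : ℤ) : ℂ) * ((Equiv.Perm.sign τ : ℤ) : ℂ)) *
          ((∏ i, A (σ i) i * ω ^ ((f (σ i) i : ℕ))) *
            (starRingEnd ℂ) (∏ i, A (τ i) i * ω ^ ((f (τ i) i : ℕ)))) := by
    intro f
    rw [Matrix.det_apply', map_sum, Finset.sum_mul_sum]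
    refine Finset.sum_congr rfl fun σ _ => Finset.sum_congr rfl fun τ _ => ?_
    simp only [Matrix.of_apply, _root_.map_mul, map_intCast]
    ring
  rw [Finset.sum_congr rfl fun f _ => expand f, Finset.sum_comm]
  have hswap : ∀ σ : Equiv.Perm (Fin n),
      (∑ f : Fin n → Fin n → Fin 3, ∑ τ : Equiv.Perm (Fin n),
        (((Equiv.Perm.sign σ : ℤ) : ℂ) * ((Equiv.Perm.sign τ : ℤ) : ℂ)) *
          ((∏ i, A (σ i) i * ω ^ ((f (σ i) i : ℕ))) *
            (starRingEnd ℂ) (∏ i, A (τ i) i * ω ^ ((f (τ i) i : ℕ))))) =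
      (3 : ℂ) ^ (n * n) * ∏ i, A (σ i) i := by
    intro σ
    rw [Finset.sum_comm]
    have : ∀ τ : Equiv.Perm (Fin n),
        (∑ f : Fin n → Fin n → Fin 3,
          (((Equiv.Perm.sign σ : ℤ) : ℂ) * ((Equiv.Perm.sign τ : ℤ) : ℂ)) *
            ((∏ i, A (σ i) i * ω ^ ((f (σ i) i : ℕ))) *
              (starRingEnd ℂ) (∏ i, A (τ i) i * ω ^ ((f (τ i) i : ℕ))))) =
        (((Equiv.Perm.sign σ : ℤ) : ℂ) * ((Equiv.Perm.sign τ : ℤ) : ℂ)) *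
          (if σ = τ then (3 : ℂ) ^ (n * n) * ∏ i, A (σ i) i else 0) := by
      intro τ
      rw [← Finset.mul_sum, key]
    rw [Finset.sum_congr rfl fun τ _ => this τ]
    rw [Finset.sum_eq_single σ]
    · rw [if_pos rfl, ← mul_assoc, ← Int.cast_mul, ← Units.val_mul,
        Int.units_mul_self, Units.val_one, Int.cast_one, one_mul]
    · intro τ _ hτ
      rw [if_neg (fun h => hτ h.symm), mul_zero]
    · intro h
      exact absurd (Finset.mem_univ σ) h
  rw [Finset.sum_congr rfl fun σ _ => hswap σ, ← Finset.mul_sum, ← mul_assoc,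
    inv_mul_cancel₀ (pow_ne_zero _ (by norm_num)), one_mul, Matrix.permanent]
end

section
/- Graham's list-scheduling bound: for scheduling n jobs with processing times p_1,…,p_n ≥ 0 on m identical machines, any list-scheduling assignment (each job assigned to a currently least-loaded machine in list order) produces a makespan C satisfying C ≤ (2 − 1/m)·C*, where C* is the optimal makespan. -/
open Finset

/-- Graham's list-scheduling bound: if `f` is a list-scheduling assignment of jobs with
nonnegative processing times `p` to `m+1` identical machines (each job goes to a machine
with currently least load), then the makespan of `f` is at most `(2 - 1/(m+1))` times
the makespan of any assignment `g`; in particular at most `(2 - 1/(m+1)) C*`. -/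
theorem graham_list_scheduling {n m : ℕ} (p : Fin n → ℝ) (hp : ∀ j, 0 ≤ p j)
    (f : Fin n → Fin (m + 1))
    (hf : ∀ j k, (∑ i ∈ univ.filter fun i => i < j ∧ f i = f j, p i) ≤
                 ∑ i ∈ univ.filter fun i => i < j ∧ f i = k, p i)
    (g : Fin n → Fin (m + 1)) :
    univ.sup' univ_nonempty (fun k => ∑ i ∈ univ.filter fun i => f i = k, p i) ≤
      (2 - 1 / (m + 1)) *
        univ.sup' univ_nonempty (fun k => ∑ i ∈ univ.filter fun i => g i = k, p i) := by
  set Cs := univ.sup' univ_nonempty (fun k => ∑ i ∈ univ.filter fun i => g i = k, p i) with hCsdef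
  have hm1 : (0:ℝ) < (m:ℝ) + 1 := by positivity
  have hCs0 : 0 ≤ Cs := by
    refine le_trans (Finset.sum_nonneg fun i _ => hp i)
      (Finset.le_sup' (fun k => ∑ i ∈ univ.filter fun i => g i = k, p i)
        (mem_univ (0 : Fin (m+1))))
  have hfac : (0:ℝ) ≤ 2 - 1 / ((m:ℝ) + 1) := by
    have : 1 / ((m:ℝ) + 1) ≤ 1 := by
      rw [div_le_one hm1]; linarith
    linarith
  have hpjC : ∀ j, p j ≤ Cs := by
    intro j
    calc p j ≤ ∑ i ∈ univ.filter fun i => g i = g j, p i := by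
          refine Finset.single_le_sum (fun i _ => hp i) ?_
          simp
      _ ≤ Cs := Finset.le_sup' (fun k => ∑ i ∈ univ.filter fun i => g i = k, p i) (mem_univ _)
  have hsum : ∑ i, p i ≤ ((m:ℝ) + 1) * Cs := by
    have heq : ∑ k : Fin (m+1), ∑ i ∈ univ.filter fun i => g i = k, p i = ∑ i, p i :=
      Finset.sum_fiberwise univ g p
    calc ∑ i, p i = ∑ k : Fin (m+1), ∑ i ∈ univ.filter fun i => g i = k, p i := heq.symm
      _ ≤ ∑ _k : Fin (m+1), Cs :=
          Finset.sum_le_sum fun k _ =>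
            Finset.le_sup' (fun k => ∑ i ∈ univ.filter fun i => g i = k, p i) (mem_univ k)
      _ = ((m:ℝ) + 1) * Cs := by
          rw [Finset.sum_const, Finset.card_univ, Fintype.card_fin, nsmul_eq_mul]
          push_cast; ring
  obtain ⟨k, -, hk⟩ := Finset.exists_mem_eq_sup' (univ_nonempty (α := Fin (m+1)))
    (fun k => ∑ i ∈ univ.filter fun i => f i = k, p i)
  rw [hk]
  rcases (univ.filter fun i => f i = k).eq_empty_or_nonempty with he | hne
  · rw [he]
    simpa using mul_nonneg hfac hCs0
  · set j := Finset.max' _ hne with hjdef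
    have hjmem := Finset.max'_mem _ hne
    have hfj : f j = k := by
      have := hjmem
      rw [Finset.mem_filter] at this
      exact this.2
    have hmax : ∀ i ∈ univ.filter fun i => f i = k, i ≤ j := fun i hi => Finset.le_max' _ i hi
    -- the fiber decomposes as j plus earlier jobs on machine k
    have hfiber : (univ.filter fun i => f i = k) =
        insert j (univ.filter fun i => i < j ∧ f i = k) := by
      ext i
      simp only [Finset.mem_insert, Finset.mem_filter, Finset.mem_univ, true_and]
      constructor
      · intro hi
        rcases eq_or_lt_of_le (hmax i (by simp [hi])) with h | h
        · exact Or.inl h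
        · exact Or.inr ⟨h, hi⟩
      · rintro (rfl | ⟨-, hi⟩)
        · exact hfj
        · exact hi
    have hjnot : j ∉ univ.filter fun i => i < j ∧ f i = k := by simp
    set s := ∑ i ∈ univ.filter fun i => i < j ∧ f i = k, p i with hsdef
    have hload : ∑ i ∈ univ.filter fun i => f i = k, p i = p j + s := by
      rw [hfiber, Finset.sum_insert hjnot]
    -- (m+1) * s ≤ sum of p over i < j
    have hms : ((m:ℝ) + 1) * s ≤ ∑ i ∈ univ.filter fun i => i < j, p i := by
      have hpart : ∑ k' : Fin (m+1), ∑ i ∈ univ.filter fun i => i < j ∧ f i = k', p i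
          = ∑ i ∈ univ.filter fun i => i < j, p i := by
        rw [← Finset.sum_fiberwise (univ.filter fun i => i < j) f p]
        refine Finset.sum_congr rfl fun k' _ => ?_
        congr 1
        ext i
        simp [and_comm]
      calc ((m:ℝ) + 1) * s = ∑ _k' : Fin (m+1), s := by
            rw [Finset.sum_const, Finset.card_univ, Fintype.card_fin, nsmul_eq_mul]
            push_cast; ring
        _ ≤ ∑ k' : Fin (m+1), ∑ i ∈ univ.filter fun i => i < j ∧ f i = k', p i := by
            refine Finset.sum_le_sum fun k' _ => ?_
            have := hf j k'
            rwa [hfj] at this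
        _ = ∑ i ∈ univ.filter fun i => i < j, p i := hpart
    have hrest : (∑ i ∈ univ.filter fun i => i < j, p i) + p j ≤ ∑ i, p i := by
      have : ∑ i ∈ insert j (univ.filter fun i => i < j), p i ≤ ∑ i, p i := by
        refine Finset.sum_le_sum_of_subset_of_nonneg (Finset.subset_univ _)
          fun i _ _ => hp i
      rwa [Finset.sum_insert (by simp), add_comm] at this
    rw [hload]
    rw [show (2 - 1/((m:ℝ)+1)) = (2*((m:ℝ)+1)-1)/((m:ℝ)+1) by field_simp,
      div_mul_eq_mul_div, le_div_iff₀ hm1]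
    nlinarith [hpjC j, hms, hrest, hsum]
end

section
/- Graham's LPT bound: if jobs are sorted in non-increasing order of processing times and each job is assigned in that order to a currently least-loaded machine, the resulting makespan C satisfies C ≤ (4/3 − 1/(3m))·C*, where C* is the optimal makespan on m identical machines. -/
open Finset

-- sum of two distinct elements is at most the total sum (nonneg weights)
lemma sum_pair_le' {n : ℕ} (p : Fin n → ℝ) (hp : ∀ j, 0 ≤ p j)
    {s : Finset (Fin n)} {i j : Fin n} (hij : i ≠ j) (hi : i ∈ s) (hj : j ∈ s) :
    p i + p j ≤ ∑ a ∈ s, p a := by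
  have hsub : ({i, j} : Finset (Fin n)) ⊆ s := by
    intro a ha
    simp only [mem_insert, mem_singleton] at ha
    rcases ha with rfl | rfl <;> assumption
  calc p i + p j = ∑ a ∈ ({i, j} : Finset (Fin n)), p a := (Finset.sum_pair hij).symm
    _ ≤ ∑ a ∈ s, p a := Finset.sum_le_sum_of_subset_of_nonneg hsub (fun a _ _ => hp a)

lemma sum_triple_le' {n : ℕ} (p : Fin n → ℝ) (hp : ∀ j, 0 ≤ p j)
    {s : Finset (Fin n)} {a b c : Fin n} (hab : a ≠ b) (hac : a ≠ c) (hbc : b ≠ c)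
    (ha : a ∈ s) (hb : b ∈ s) (hc : c ∈ s) :
    p a + p b + p c ≤ ∑ x ∈ s, p x := by
  have hsub : ({a, b, c} : Finset (Fin n)) ⊆ s := by
    intro x hx
    simp only [mem_insert, mem_singleton] at hx
    rcases hx with rfl | rfl | rfl <;> assumption
  have h1 : ∑ x ∈ ({a, b, c} : Finset (Fin n)), p x = p a + p b + p c := by
    rw [Finset.sum_insert (by simp [hab, hac]), Finset.sum_insert (by simp [hbc]),
      Finset.sum_singleton, add_assoc]
  calc p a + p b + p c = ∑ x ∈ ({a, b, c} : Finset (Fin n)), p x := h1.symm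
    _ ≤ ∑ x ∈ s, p x := Finset.sum_le_sum_of_subset_of_nonneg hsub (fun x _ _ => hp x)

-- each machine has at most 2 jobs of index ≤ ℓ, when all such jobs are > c/3
lemma fiber_le_two {n m : ℕ} (p : Fin n → ℝ) (hp : ∀ j, 0 ≤ p j)
    (g : Fin n → Fin (m + 1)) (c : ℝ)
    (hload : ∀ k, (∑ i ∈ univ.filter fun i => g i = k, p i) ≤ c)
    (ℓ : Fin n) (hbig : ∀ i : Fin n, i ≤ ℓ → c / 3 < p i)
    (s : Finset (Fin n)) (hs : ∀ i ∈ s, i ≤ ℓ) (k : Fin (m + 1)) :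
    (s.filter fun i => g i = k).card ≤ 2 := by
  by_contra h
  push_neg at h
  obtain ⟨a, b, c', ha, hb, hc', hab, hac, hbc⟩ := Finset.two_lt_card_iff.mp h
  have hma := (mem_filter.mp ha)
  have hmb := (mem_filter.mp hb)
  have hmc := (mem_filter.mp hc')
  have hsum : p a + p b + p c' ≤ ∑ x ∈ univ.filter (fun i => g i = k), p x :=
    sum_triple_le' p hp hab hac hbc
      (mem_filter.mpr ⟨mem_univ _, hma.2⟩) (mem_filter.mpr ⟨mem_univ _, hmb.2⟩)
      (mem_filter.mpr ⟨mem_univ _, hmc.2⟩)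
  have h1 := hbig a (hs a hma.1)
  have h2 := hbig b (hs b hmb.1)
  have h3 := hbig c' (hs c' hmc.1)
  have := hload k
  linarith

-- lemma C : the critical job index is < 2(m+1)
lemma ell_bound {n m : ℕ} (p : Fin n → ℝ) (hp : ∀ j, 0 ≤ p j)
    (g : Fin n → Fin (m + 1)) (c : ℝ)
    (hload : ∀ k, (∑ i ∈ univ.filter fun i => g i = k, p i) ≤ c)
    (ℓ : Fin n) (hbig : ∀ i : Fin n, i ≤ ℓ → c / 3 < p i) :
    (ℓ : ℕ) + 1 ≤ 2 * (m + 1) := by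
  have hIic : (univ.filter fun i : Fin n => i ≤ ℓ) = Finset.Iic ℓ := by ext i; simp
  have hcard : (univ.filter fun i : Fin n => i ≤ ℓ).card = (ℓ : ℕ) + 1 := by
    rw [hIic, Fin.card_Iic]
  have hfib := Finset.card_eq_sum_card_fiberwise
    (fun (x : Fin n) (_ : x ∈ univ.filter fun i => i ≤ ℓ) => mem_univ (g x))
  rw [hcard] at hfib
  have hle : ∑ k ∈ (univ : Finset (Fin (m+1))),
      ((univ.filter fun i : Fin n => i ≤ ℓ).filter fun i => g i = k).card ≤
      ∑ _k ∈ (univ : Finset (Fin (m+1))), 2 :=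
    Finset.sum_le_sum fun k _ =>
      fiber_le_two p hp g c hload ℓ hbig _ (fun i hi => (mem_filter.mp hi).2) k
  rw [Finset.sum_const, card_univ, Fintype.card_fin, smul_eq_mul] at hle
  omega

-- step 1: some machine has prefix load at most p k0
lemma step1 {n m : ℕ} (p : Fin n → ℝ) (hp : ∀ j, 0 ≤ p j)
    (hsorted : ∀ i j : Fin n, i ≤ j → p j ≤ p i)
    (f : Fin n → Fin (m + 1)) (ℓ k0 : Fin n)
    (hcount : (ℓ : ℕ) + (k0 : ℕ) + 1 = 2 * (m + 1)) :
    ∃ k', (∑ i ∈ univ.filter fun i => i < ℓ ∧ f i = k', p i) ≤ p k0 := by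
  by_contra hall
  push_neg at hall
  set T : Finset (Fin n) := univ.filter fun i => i < ℓ with hT
  have hTcard : T.card = (ℓ : ℕ) := by
    have : T = Finset.Iio ℓ := by ext i; simp [hT]
    rw [this, Fin.card_Iio]
  have hfilterT : ∀ k' : Fin (m+1),
      (univ.filter fun i => i < ℓ ∧ f i = k') = T.filter fun i => f i = k' := by
    intro k'; rw [hT, Finset.filter_filter]
  have hne : ∀ k' : Fin (m+1), (T.filter fun i => f i = k').Nonempty := by
    intro k'
    rw [Finset.nonempty_iff_ne_empty]
    intro hemp
    have := hall k'
    rw [hfilterT k', hemp, Finset.sum_empty] at this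
    exact absurd this (not_lt.mpr (hp k0))
  have hSsub : (univ.filter fun k' : Fin (m+1) => (T.filter fun i => f i = k').card = 1)
      ⊆ (univ.filter fun i : Fin n => i < k0).image f := by
    intro k' hk'
    obtain ⟨a, ha⟩ := Finset.card_eq_one.mp (mem_filter.mp hk').2
    have haT : a ∈ T.filter fun i => f i = k' := ha ▸ Finset.mem_singleton_self a
    have hfa : f a = k' := (mem_filter.mp haT).2
    have hpa : p k0 < p a := by
      have := hall k'
      rw [hfilterT k', ha, Finset.sum_singleton] at this
      exact this
    have hak0 : a < k0 := by
      by_contra h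
      push_neg at h
      exact absurd (hsorted k0 a h) (not_le.mpr hpa)
    exact mem_image.mpr ⟨a, mem_filter.mpr ⟨mem_univ a, hak0⟩, hfa⟩
  have hScard : (univ.filter fun k' : Fin (m+1) =>
      (T.filter fun i => f i = k').card = 1).card ≤ (k0 : ℕ) := by
    calc (univ.filter fun k' : Fin (m+1) => (T.filter fun i => f i = k').card = 1).card
        ≤ ((univ.filter fun i : Fin n => i < k0).image f).card :=
          Finset.card_le_card hSsub
      _ ≤ (univ.filter fun i : Fin n => i < k0).card := Finset.card_image_le
      _ = (k0 : ℕ) := by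
          have : (univ.filter fun i : Fin n => i < k0) = Finset.Iio k0 := by ext i; simp
          rw [this, Fin.card_Iio]
  have hfibsum := Finset.card_eq_sum_card_fiberwise
    (fun (x : Fin n) (_ : x ∈ T) => mem_univ (f x))
  rw [hTcard] at hfibsum
  have hsplit := Finset.sum_filter_add_sum_filter_not (univ : Finset (Fin (m+1)))
    (fun k' => (T.filter fun i => f i = k').card = 1)
    (fun k' => (T.filter fun i => f i = k').card)
  have h1 : ∑ k' ∈ (univ.filter fun k' : Fin (m+1) =>
        (T.filter fun i => f i = k').card = 1),
      (T.filter fun i => f i = k').card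
      = (univ.filter fun k' : Fin (m+1) =>
        (T.filter fun i => f i = k').card = 1).card := by
    rw [Finset.sum_congr rfl (fun k' hk' => (mem_filter.mp hk').2), Finset.sum_const,
      smul_eq_mul, mul_one]
  have h2 : (univ.filter fun k' : Fin (m+1) =>
        ¬(T.filter fun i => f i = k').card = 1).card * 2 ≤
      ∑ k' ∈ (univ.filter fun k' : Fin (m+1) => ¬(T.filter fun i => f i = k').card = 1),
        (T.filter fun i => f i = k').card := by
    have := Finset.card_nsmul_le_sum
      (univ.filter fun k' : Fin (m+1) => ¬(T.filter fun i => f i = k').card = 1)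
      (fun k' => (T.filter fun i => f i = k').card) 2
      (fun k' hk' => by
        have hne' := Finset.card_pos.mpr (hne k')
        have h1' := (mem_filter.mp hk').2
        show 2 ≤ (T.filter fun i => f i = k').card
        omega)
    simpa [smul_eq_mul, mul_comm] using this
  have hcardsplit := Finset.card_filter_add_card_filter_not
    (s := (univ : Finset (Fin (m+1))))
    (p := fun k' => (T.filter fun i => f i = k').card = 1)
  rw [card_univ, Fintype.card_fin] at hcardsplit
  omega

-- step 2: p k0 + p ℓ ≤ c when all jobs up to ℓ are big
lemma step2 {n m : ℕ} (p : Fin n → ℝ) (hp : ∀ j, 0 ≤ p j)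
    (hsorted : ∀ i j : Fin n, i ≤ j → p j ≤ p i)
    (g : Fin n → Fin (m + 1)) (c : ℝ)
    (hload : ∀ k, (∑ i ∈ univ.filter fun i => g i = k, p i) ≤ c)
    (ℓ k0 : Fin n) (hk0 : k0 < ℓ) (hcount : (ℓ : ℕ) + (k0 : ℕ) + 1 = 2 * (m + 1))
    (hbig : ∀ i : Fin n, i ≤ ℓ → c / 3 < p i) :
    p k0 + p ℓ ≤ c := by
  have hpair : ∀ i i' : Fin n, i ≠ i' → g i = g i' → p i + p i' ≤ c := by
    intro i i' hii hgg
    refine le_trans (sum_pair_le' p hp hii ?_ ?_) (hload (g i))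
    · exact mem_filter.mpr ⟨mem_univ _, rfl⟩
    · exact mem_filter.mpr ⟨mem_univ _, hgg.symm⟩
  set A : Finset (Fin n) := univ.filter fun i => i ≤ k0 with hA
  by_cases hinj : ∃ i ∈ A, ∃ i' ∈ A, i ≠ i' ∧ g i = g i'
  · obtain ⟨i, hi, i', hi', hii, hgg⟩ := hinj
    have h1 : p k0 ≤ p i := hsorted i k0 (mem_filter.mp hi).2
    have h2 : p k0 ≤ p i' := hsorted i' k0 (mem_filter.mp hi').2
    have h3 : p ℓ ≤ p k0 := hsorted k0 ℓ (le_of_lt hk0)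
    have := hpair i i' hii hgg
    linarith
  · push_neg at hinj
    have hinjOn : Set.InjOn g A := by
      intro i hi i' hi' hgg
      by_contra hne
      exact absurd hgg (hinj i (by simpa using hi) i' (by simpa using hi') hne)
    have hAcard : A.card = (k0 : ℕ) + 1 := by
      have : A = Finset.Iic k0 := by ext i; simp [hA]
      rw [this, Fin.card_Iic]
    have hgAcard : (A.image g).card = (k0 : ℕ) + 1 := by
      rw [Finset.card_image_of_injOn hinjOn, hAcard]
    set B : Finset (Fin n) := univ.filter fun i => k0 < i ∧ i ≤ ℓ with hB
    have hBcard : B.card = (ℓ : ℕ) - (k0 : ℕ) := by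
      have : B = Finset.Ioc k0 ℓ := by ext i; simp [hB]
      rw [this, Fin.card_Ioc]
    set s : Finset (Fin n) := B.filter fun i => g i ∉ A.image g with hs
    have hscard : s.card ≤ 2 * ((m + 1) - ((k0 : ℕ) + 1)) := by
      have hmem : ∀ x ∈ s, g x ∈ (univ : Finset (Fin (m+1))) \ A.image g := by
        intro x hx
        exact Finset.mem_sdiff.mpr ⟨mem_univ _, (mem_filter.mp hx).2⟩
      have hfib := Finset.card_eq_sum_card_fiberwise hmem
      have hle : ∑ k ∈ (univ : Finset (Fin (m+1))) \ A.image g,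
          (s.filter fun i => g i = k).card ≤
          ∑ _k ∈ (univ : Finset (Fin (m+1))) \ A.image g, 2 := by
        refine Finset.sum_le_sum fun k _ => ?_
        have hsub : ∀ i ∈ s, i ≤ ℓ := by
          intro i hi
          have : i ∈ B := Finset.mem_of_mem_filter _ hi
          exact (mem_filter.mp this).2.2
        exact fiber_le_two p hp g c hload ℓ hbig s
          (fun i hi => hsub i hi) k
      rw [Finset.sum_const, smul_eq_mul] at hle
      have hsd : ((univ : Finset (Fin (m+1))) \ A.image g).card = (m + 1) - ((k0:ℕ) + 1) := by
        rw [Finset.card_sdiff_of_subset (Finset.subset_univ _), card_univ, Fintype.card_fin, hgAcard]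
      rw [hfib]
      omega
    have hslt : s.card < B.card := by
      rw [hBcard]
      have hk0n : (k0 : ℕ) + 1 ≤ m + 1 := by omega
      omega
    have hssub : s ⊆ B := Finset.filter_subset _ _
    obtain ⟨i, hiB, hins⟩ : ∃ i ∈ B, i ∉ s := by
      by_contra h
      push_neg at h
      exact absurd (Finset.card_le_card h) (not_le.mpr hslt)
    have higA : g i ∈ A.image g := by
      by_contra h
      exact hins (mem_filter.mpr ⟨hiB, h⟩)
    obtain ⟨i', hi'A, hgi'⟩ := mem_image.mp higA
    have hi'k0 : i' ≤ k0 := (mem_filter.mp hi'A).2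
    have hiB' := (mem_filter.mp hiB).2
    have hii : i ≠ i' := by
      intro h
      rw [h] at hiB'
      exact absurd hi'k0 (not_le.mpr hiB'.1)
    have h1 : p ℓ ≤ p i := hsorted i ℓ hiB'.2
    have h2 : p k0 ≤ p i' := hsorted i' k0 hi'k0
    have := hpair i i' hii hgi'.symm
    linarith

-- empty machine when fewer than m+1 earlier jobs
lemma empty_machine {n m : ℕ} (p : Fin n → ℝ)
    (f : Fin n → Fin (m + 1)) (ℓ : Fin n) (hl : (ℓ : ℕ) < m + 1) :
    ∃ k', (∑ i ∈ univ.filter fun i => i < ℓ ∧ f i = k', p i) = 0 := by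
  have himg : ((univ.filter fun i : Fin n => i < ℓ).image f).card < m + 1 := by
    calc ((univ.filter fun i : Fin n => i < ℓ).image f).card
        ≤ (univ.filter fun i : Fin n => i < ℓ).card := Finset.card_image_le
      _ = (ℓ : ℕ) := by
          have : (univ.filter fun i : Fin n => i < ℓ) = Finset.Iio ℓ := by ext i; simp
          rw [this, Fin.card_Iio]
      _ < m + 1 := hl
  obtain ⟨k', hk'⟩ : ∃ k' : Fin (m+1), k' ∉ (univ.filter fun i : Fin n => i < ℓ).image f := by
    by_contra h
    push_neg at h
    have : (univ : Finset (Fin (m+1))) ⊆ (univ.filter fun i : Fin n => i < ℓ).image f :=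
      fun k _ => h k
    have := Finset.card_le_card this
    rw [card_univ, Fintype.card_fin] at this
    omega
  refine ⟨k', ?_⟩
  have hemp : (univ.filter fun i => i < ℓ ∧ f i = k') = ∅ := by
    rw [Finset.filter_eq_empty_iff]
    rintro i _ ⟨hil, hfi⟩
    exact hk' (mem_image.mpr ⟨i, mem_filter.mpr ⟨mem_univ i, hil⟩, hfi⟩)
  rw [hemp, Finset.sum_empty]

/-- Graham's LPT bound: if jobs are sorted in non-increasing order of processing times
and `f` is a list-scheduling assignment (each job goes to a currently least-loaded
machine, in order), then the makespan of `f` is at most `(4/3 - 1/(3(m+1)))` times the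
makespan of any assignment `g`; in particular at most `(4/3 - 1/(3(m+1))) C*`. -/
theorem graham_lpt {n m : ℕ} (p : Fin n → ℝ) (hp : ∀ j, 0 ≤ p j)
    (hsorted : ∀ i j : Fin n, i ≤ j → p j ≤ p i)
    (f : Fin n → Fin (m + 1))
    (hf : ∀ j k, (∑ i ∈ univ.filter fun i => i < j ∧ f i = f j, p i) ≤
                 ∑ i ∈ univ.filter fun i => i < j ∧ f i = k, p i)
    (g : Fin n → Fin (m + 1)) :
    univ.sup' univ_nonempty (fun k => ∑ i ∈ univ.filter fun i => f i = k, p i) ≤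
      (4 / 3 - 1 / (3 * (m + 1))) *
        univ.sup' univ_nonempty (fun k => ∑ i ∈ univ.filter fun i => g i = k, p i) := by
  set c := univ.sup' univ_nonempty (fun k => ∑ i ∈ univ.filter fun i => g i = k, p i)
    with hcdef
  have hload : ∀ k, (∑ i ∈ univ.filter fun i => g i = k, p i) ≤ c := by
    intro k
    rw [hcdef]
    exact Finset.le_sup' (fun k => ∑ i ∈ univ.filter fun i => g i = k, p i) (mem_univ k)
  have hc0 : (0 : ℝ) ≤ c :=
    le_trans (Finset.sum_nonneg fun i _ => hp i) (hload 0)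
  have hx1 : (1 : ℝ) ≤ (m : ℝ) + 1 := by
    have : (0 : ℝ) ≤ (m : ℝ) := Nat.cast_nonneg m
    linarith
  have hxpos : (0 : ℝ) < (m : ℝ) + 1 := by linarith
  have hr1 : (1 : ℝ) ≤ 4 / 3 - 1 / (3 * ((m : ℝ) + 1)) := by
    have h1 : 1 / (3 * ((m : ℝ) + 1)) ≤ 1 / 3 := by
      apply one_div_le_one_div_of_le
      · norm_num
      · linarith
    linarith
  have hjob : ∀ j : Fin n, p j ≤ c := by
    intro j
    refine le_trans ?_ (hload (g j))
    exact Finset.single_le_sum (fun i _ => hp i) (mem_filter.mpr ⟨mem_univ j, rfl⟩)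
  have hcrc : c ≤ (4 / 3 - 1 / (3 * ((m : ℝ) + 1))) * c :=
    le_mul_of_one_le_left hc0 hr1
  apply Finset.sup'_le
  intro k _
  by_cases hne : (univ.filter fun i => f i = k).Nonempty
  swap
  · rw [Finset.not_nonempty_iff_eq_empty] at hne
    rw [hne, Finset.sum_empty]
    exact mul_nonneg (by linarith) hc0
  · set ℓ := (univ.filter fun i => f i = k).max' hne with hldef
    have hlmem := Finset.max'_mem _ hne
    have hfl : f ℓ = k := (mem_filter.mp hlmem).2
    have hmax : ∀ i, f i = k → i ≤ ℓ := fun i hi =>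
      Finset.le_max' _ i (mem_filter.mpr ⟨mem_univ i, hi⟩)
    have hsplit : (univ.filter fun i => f i = k)
        = insert ℓ (univ.filter fun i => i < ℓ ∧ f i = k) := by
      ext i
      simp only [mem_insert, mem_filter, mem_univ, true_and]
      constructor
      · intro hi
        rcases eq_or_lt_of_le (hmax i hi) with h | h
        · exact Or.inl h
        · exact Or.inr ⟨h, hi⟩
      · rintro (rfl | ⟨-, hi⟩)
        · exact hfl
        · exact hi
    have hnotmem : ℓ ∉ (univ.filter fun i => i < ℓ ∧ f i = k) := by simp
    rw [hsplit, Finset.sum_insert hnotmem]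
    -- s is the start load of job ℓ on its machine
    have hsmin : ∀ k', (∑ i ∈ univ.filter fun i => i < ℓ ∧ f i = k, p i) ≤
        ∑ i ∈ univ.filter fun i => i < ℓ ∧ f i = k', p i := by
      intro k'
      have := hf ℓ k'
      rwa [hfl] at this
    by_cases hcase : p ℓ ≤ c / 3
    · -- small last job case
      have hfib : ∑ k' ∈ (univ : Finset (Fin (m+1))),
          (∑ i ∈ (univ.filter fun i : Fin n => i < ℓ).filter fun i => f i = k', p i)
          = ∑ i ∈ univ.filter fun i : Fin n => i < ℓ, p i :=
        Finset.sum_fiberwise _ f p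
      have hfilteq : ∀ k' : Fin (m+1),
          (univ.filter fun i : Fin n => i < ℓ).filter (fun i => f i = k')
          = univ.filter fun i => i < ℓ ∧ f i = k' := by
        intro k'; rw [Finset.filter_filter]
      have h1 : ((m : ℝ) + 1) * (∑ i ∈ univ.filter fun i => i < ℓ ∧ f i = k, p i) ≤
          ∑ i ∈ univ.filter fun i : Fin n => i < ℓ, p i := by
        rw [← hfib]
        calc ((m : ℝ) + 1) * (∑ i ∈ univ.filter fun i => i < ℓ ∧ f i = k, p i)
            = ∑ _k' ∈ (univ : Finset (Fin (m+1))),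
              (∑ i ∈ univ.filter fun i => i < ℓ ∧ f i = k, p i) := by
              rw [Finset.sum_const, card_univ, Fintype.card_fin, nsmul_eq_mul]
              push_cast
              ring
          _ ≤ _ := Finset.sum_le_sum fun k' _ => by
              rw [hfilteq k']; exact hsmin k'
      have h2 : (∑ i ∈ univ.filter fun i : Fin n => i < ℓ, p i) + p ℓ ≤ ∑ i, p i := by
        have hins : insert ℓ (univ.filter fun i : Fin n => i < ℓ) ⊆ univ :=
          Finset.subset_univ _
        have hnm : ℓ ∉ (univ.filter fun i : Fin n => i < ℓ) := by simp
        calc (∑ i ∈ univ.filter fun i : Fin n => i < ℓ, p i) + p ℓ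
            = ∑ i ∈ insert ℓ (univ.filter fun i : Fin n => i < ℓ), p i := by
              rw [Finset.sum_insert hnm]; ring
          _ ≤ ∑ i, p i := Finset.sum_le_sum_of_subset_of_nonneg hins fun i _ _ => hp i
      have h3 : (∑ i, p i) ≤ ((m : ℝ) + 1) * c := by
        have := Finset.sum_fiberwise (univ : Finset (Fin n)) g p
        calc (∑ i, p i) = ∑ k' ∈ (univ : Finset (Fin (m+1))),
            ∑ i ∈ univ.filter fun i => g i = k', p i := this.symm
          _ ≤ ∑ _k' ∈ (univ : Finset (Fin (m+1))), c :=
              Finset.sum_le_sum fun k' _ => hload k'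
          _ = ((m : ℝ) + 1) * c := by
              rw [Finset.sum_const, card_univ, Fintype.card_fin, nsmul_eq_mul]
              push_cast
              ring
      have hpl0 : (0 : ℝ) ≤ p ℓ := hp ℓ
      have hexp : ((m : ℝ) + 1) * ((4 / 3 - 1 / (3 * ((m : ℝ) + 1))) * c)
          = 4 / 3 * (((m : ℝ) + 1) * c) - c / 3 := by
        field_simp
      have hkey : ((m : ℝ) + 1) * (p ℓ + ∑ i ∈ univ.filter fun i => i < ℓ ∧ f i = k, p i)
          ≤ ((m : ℝ) + 1) * ((4 / 3 - 1 / (3 * ((m : ℝ) + 1))) * c) := by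
        rw [hexp]
        have h4 : ((m : ℝ) + 1 - 1) * p ℓ ≤ ((m : ℝ) + 1 - 1) * (c / 3) :=
          mul_le_mul_of_nonneg_left hcase (by linarith)
        nlinarith [h1, h2, h3]
      have := le_of_mul_le_mul_left hkey hxpos
      exact this
    · -- big last job case
      push_neg at hcase
      have hbig : ∀ i : Fin n, i ≤ ℓ → c / 3 < p i := fun i hi =>
        lt_of_lt_of_le hcase (hsorted i ℓ hi)
      have hmain : p ℓ + (∑ i ∈ univ.filter fun i => i < ℓ ∧ f i = k, p i) ≤ c := by
        by_cases hl : (ℓ : ℕ) < m + 1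
        · obtain ⟨k', hk'⟩ := empty_machine p f ℓ hl
          have hs0 : (∑ i ∈ univ.filter fun i => i < ℓ ∧ f i = k, p i) ≤ 0 := by
            rw [← hk']; exact hsmin k'
          have := hjob ℓ
          linarith
        · push_neg at hl
          have hl2 := ell_bound p hp g c hload ℓ hbig
          have hk0lt : 2 * (m + 1) - 1 - (ℓ : ℕ) < n := by
            have := ℓ.isLt
            omega
          set k0 : Fin n := ⟨2 * (m + 1) - 1 - (ℓ : ℕ), hk0lt⟩ with hk0def
          have hk0l : k0 < ℓ := by
            rw [Fin.lt_def]
            show 2 * (m + 1) - 1 - (ℓ : ℕ) < (ℓ : ℕ)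
            omega
          have hcount : (ℓ : ℕ) + (k0 : ℕ) + 1 = 2 * (m + 1) := by
            show (ℓ : ℕ) + (2 * (m + 1) - 1 - (ℓ : ℕ)) + 1 = 2 * (m + 1)
            omega
          obtain ⟨k', hk'⟩ := step1 p hp hsorted f ℓ k0 hcount
          have hs1 : (∑ i ∈ univ.filter fun i => i < ℓ ∧ f i = k, p i) ≤ p k0 :=
            le_trans (hsmin k') hk'
          have hs2 := step2 p hp hsorted g c hload ℓ k0 hk0l hcount hbig
          linarith
      linarith
end

section
/- Variance of Kendall's τ under the null: if σ is a uniformly random permutation of {1,…,n} (n ≥ 2) and S = Σ_{i<j} sgn(σ(j) − σ(i)), then Var(S) = n(n−1)(2n+5)/18, equivalently Var(τ) = 2(2n+5)/(9n(n−1)) for τ = S/(n(n−1)/2). -/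
/-! Write `S = ∑_{i<j} s_{ij}` with `s_{ij}(σ) = sgn (σ j - σ i)`. Right multiplication by a
transposition shows that each `s_{ij}` has mean zero, that `s_{ij}` and `s_{kl}` are uncorrelated
for disjoint pairs, and that the three correlations between pairs sharing a point around a
triangle are equal; since they sum to `1` pointwise, each is `1/3`. Hence
`3 E[s_p s_q] = ⟨e_{p₁} - e_{p₂}, e_{q₁} - e_{q₂}⟩ + [p = q]`, and summing over ascending
pairs gives `3 E[S²] = ∑_m (n - 1 - 2m)² + n(n-1)/2 = n(n²-1)/3 + n(n-1)/2`. -/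

open Finset

/-- Kendall's `S` statistic of a permutation `σ` (relative to the identity ranking):
`S(σ) = ∑_{i<j} sgn(σ(j) - σ(i))`. -/
def kendallS (n : ℕ) (σ : Equiv.Perm (Fin n)) : ℤ :=
  ∑ q ∈ univ.filter (fun q : Fin n × Fin n => q.1 < q.2),
    Int.sign ((σ q.2 : ℤ) - (σ q.1 : ℤ))

open Equiv Function
open scoped Nat

-- Of three distinct integers, the two extreme ones see the other two on the same side and the
-- middle one sees them on opposite sides.
theorem Int.sign_sub_mul_sign_sub_add_cyclic {x y z : ℤ} (hxy : x ≠ y) (hxz : x ≠ z)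
    (hyz : y ≠ z) :
    sign (y - x) * sign (z - x) + sign (x - y) * sign (z - y)
      + sign (x - z) * sign (y - z) = 1 := by
  rcases hxy.lt_or_gt with hxy | hxy <;> rcases hxz.lt_or_gt with hxz | hxz <;>
    rcases hyz.lt_or_gt with hyz | hyz <;>
    simp only [Int.sign_eq_one_of_pos, Int.sign_eq_neg_one_of_neg, sub_pos, sub_neg, *] <;> omega

section PairSign

variable {α : Type*} {g : α → ℤ} {a b c d : α}

def pairSign (g : α → ℤ) (σ : Perm α) (i j : α) : ℤ :=
  Int.sign (g (σ j) - g (σ i))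

theorem pairSign_swap (g : α → ℤ) (σ : Perm α) (i j : α) :
    pairSign g σ j i = -pairSign g σ i j := by
  rw [pairSign, pairSign, ← Int.sign_neg, neg_sub]

theorem pairSign_mul_self (hg : Injective g) (σ : Perm α) (hab : a ≠ b) :
    pairSign g σ a b * pairSign g σ a b = 1 := by
  have h : g (σ b) - g (σ a) ≠ 0 := sub_ne_zero.mpr (hg.ne (σ.injective.ne hab.symm))
  rw [pairSign, ← Int.sign_mul, Int.sign_eq_one_iff_pos]
  exact mul_self_pos.mpr h

theorem pairSign_cyclic (hg : Injective g) (σ : Perm α) (hab : a ≠ b) (hac : a ≠ c)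
    (hbc : b ≠ c) :
    pairSign g σ a b * pairSign g σ a c + pairSign g σ b a * pairSign g σ b c
      + pairSign g σ c a * pairSign g σ c b = 1 :=
  Int.sign_sub_mul_sign_sub_add_cyclic (hg.ne (σ.injective.ne hab))
    (hg.ne (σ.injective.ne hac)) (hg.ne (σ.injective.ne hbc))

theorem pairSign_mul (g : α → ℤ) (σ π : Perm α) (i j : α) :
    pairSign g (σ * π) i j = pairSign g σ (π i) (π j) := rfl

variable [Fintype α] [DecidableEq α]

-- `(card α)!` times the mixed moment `E[s_ab s_cd]` for a uniformly random `σ`.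
def pairSignMoment (g : α → ℤ) (a b c d : α) : ℤ :=
  ∑ σ : Perm α, pairSign g σ a b * pairSign g σ c d

theorem sum_pairSign_eq_zero (g : α → ℤ) (a b : α) :
    ∑ σ : Perm α, pairSign g σ a b = 0 := by
  have h := Equiv.sum_comp (Equiv.mulRight (swap a b)) fun σ => pairSign g σ a b
  simp only [coe_mulRight, pairSign_mul, swap_apply_left, swap_apply_right, pairSign_swap g _ a b,
    sum_neg_distrib] at h
  omega

theorem pairSignMoment_perm (g : α → ℤ) (π : Perm α) (a b c d : α) :
    pairSignMoment g (π a) (π b) (π c) (π d) = pairSignMoment g a b c d :=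
  Equiv.sum_comp (Equiv.mulRight π) fun σ => pairSign g σ a b * pairSign g σ c d

theorem pairSignMoment_swap_left (g : α → ℤ) (a b c d : α) :
    pairSignMoment g b a c d = -pairSignMoment g a b c d := by
  simp only [pairSignMoment, pairSign_swap g _ a b, neg_mul, sum_neg_distrib]

theorem pairSignMoment_swap_right (g : α → ℤ) (a b c d : α) :
    pairSignMoment g a b d c = -pairSignMoment g a b c d := by
  simp only [pairSignMoment, pairSign_swap g _ c d, mul_neg, sum_neg_distrib]

theorem pairSignMoment_comm (g : α → ℤ) (a b c d : α) :
    pairSignMoment g c d a b = pairSignMoment g a b c d := by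
  simp only [pairSignMoment, mul_comm]

theorem pairSignMoment_self (hg : Injective g) (hab : a ≠ b) :
    pairSignMoment g a b a b = (Fintype.card α)! := by
  simp [pairSignMoment, pairSign_mul_self hg _ hab, Fintype.card_perm]

theorem pairSignMoment_of_disjoint (g : α → ℤ) (hca : c ≠ a) (hcb : c ≠ b)
    (hda : d ≠ a) (hdb : d ≠ b) : pairSignMoment g a b c d = 0 := by
  have h := pairSignMoment_perm g (swap a b) a b c d
  rw [swap_apply_left, swap_apply_right, swap_apply_of_ne_of_ne hca hcb,
    swap_apply_of_ne_of_ne hda hdb, pairSignMoment_swap_left] at h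
  omega

theorem three_mul_pairSignMoment_of_fst_eq (hg : Injective g) (hab : a ≠ b) (hac : a ≠ c)
    (hbc : b ≠ c) : 3 * pairSignMoment g a b a c = (Fintype.card α)! := by
  have hb := pairSignMoment_perm g (swap a b) a b a c
  rw [swap_apply_left, swap_apply_right, swap_apply_of_ne_of_ne hac.symm hbc.symm] at hb
  have hc := pairSignMoment_perm g (swap a c) a b a c
  rw [swap_apply_left, swap_apply_right, swap_apply_of_ne_of_ne hab.symm hbc,
    pairSignMoment_comm] at hc
  have hsum : pairSignMoment g a b a c + pairSignMoment g b a b c + pairSignMoment g c a c b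
      = (Fintype.card α)! := by
    simp [pairSignMoment, ← sum_add_distrib, pairSign_cyclic hg _ hab hac hbc,
      Fintype.card_perm]
  omega

def incidence (a b m : α) : ℤ := (if a = m then 1 else 0) - (if b = m then 1 else 0)

theorem sum_incidence_mul_incidence (a b c d : α) :
    ∑ m, incidence a b m * incidence c d m =
      (if a = c then 1 else 0) + (if b = d then 1 else 0) - (if a = d then 1 else 0)
        - (if b = c then 1 else 0) := by
  simp only [incidence, mul_sub, mul_ite, mul_one, mul_zero, sum_sub_distrib, sum_ite_eq, mem_univ,
    if_true]
  ring

theorem three_mul_pairSignMoment (hg : Injective g) (hab : a ≠ b) (hcd : c ≠ d) :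
    3 * pairSignMoment g a b c d = (Fintype.card α)! *
      ((if a = c then 1 else 0) + (if b = d then 1 else 0) - (if a = d then 1 else 0)
        - (if b = c then 1 else 0) + (if (a, b) = (c, d) then 1 else 0)
        - (if (a, b) = (d, c) then 1 else 0)) := by
  by_cases hac : a = c <;> by_cases hbd : b = d
  · subst hac hbd
    simp [pairSignMoment_self hg hab, hab, hab.symm, mul_comm]
  · subst hac
    simp [three_mul_pairSignMoment_of_fst_eq hg hab hcd hbd, hbd, hab.symm, hcd]
  · subst hbd
    have key : 3 * pairSignMoment g a b c b = (Fintype.card α)! := by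
      rw [pairSignMoment_swap_left g b a c b, pairSignMoment_swap_right g b a b c, neg_neg]
      exact three_mul_pairSignMoment_of_fst_eq hg hab.symm hcd.symm hac
    simp [key, hac, hab, hcd.symm]
  by_cases had : a = d <;> by_cases hbc : b = c
  · subst had hbc
    simp [pairSignMoment_swap_right g a b a b, pairSignMoment_self hg hab, hab, hab.symm, mul_comm]
  · subst had
    have key : 3 * pairSignMoment g a b c a = -(Fintype.card α)! := by
      rw [pairSignMoment_swap_right, mul_neg, three_mul_pairSignMoment_of_fst_eq hg hab hac hbc]
    simp [key, hac, hbd, hbc]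
  · subst hbc
    have key : 3 * pairSignMoment g a b b d = -(Fintype.card α)! := by
      rw [pairSignMoment_swap_left g b a, mul_neg,
        three_mul_pairSignMoment_of_fst_eq hg hab.symm hcd had]
    simp [key, hac, hbd, had]
  · simp [pairSignMoment_of_disjoint g (Ne.symm hac) (Ne.symm hbc) (Ne.symm had) (Ne.symm hbd),
      hac, hbd, had, hbc]

end PairSign

theorem three_mul_sum_range_sub_two_mul_sq (x : ℤ) (k : ℕ) :
    3 * ∑ m ∈ range k, (x - 2 * m) ^ 2 =
      3 * k * x ^ 2 - 6 * k * (k - 1) * x + 2 * k * (k - 1) * (2 * k - 1) := by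
  induction k with
  | zero => simp
  | succ k ih => rw [sum_range_succ, mul_add, ih]; push_cast; ring

section Kendall

def ascendingPairs (n : ℕ) : Finset (Fin n × Fin n) := univ.filter fun q => q.1 < q.2

variable {n : ℕ}

theorem card_ascendingPairs_filter_fst (m : Fin n) :
    #{p ∈ ascendingPairs n | p.1 = m} = n - 1 - m := by
  rw [← Fin.card_Ioi]
  refine card_nbij' Prod.snd (fun b => (m, b)) ?_ ?_ ?_ ?_ <;> intro p <;>
    grind [ascendingPairs, coe_filter, coe_Ioi, coe_Iio]

theorem card_ascendingPairs_filter_snd (m : Fin n) :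
    #{p ∈ ascendingPairs n | p.2 = m} = m := by
  rw [← Fin.card_Iio]
  refine card_nbij' Prod.fst (fun a => (a, m)) ?_ ?_ ?_ ?_ <;> intro p <;>
    grind [ascendingPairs, coe_filter, coe_Ioi, coe_Iio]

theorem sum_ascendingPairs_incidence (m : Fin n) :
    ∑ p ∈ ascendingPairs n, incidence p.1 p.2 m = (n : ℤ) - 1 - 2 * m := by
  simp only [incidence, sum_sub_distrib, sum_boole, card_ascendingPairs_filter_fst,
    card_ascendingPairs_filter_snd]
  have := m.isLt
  push_cast [Nat.sub_sub, Nat.cast_sub (show 1 + (m : ℕ) ≤ n by omega)]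
  ring

theorem two_mul_card_ascendingPairs : 2 * (#(ascendingPairs n) : ℤ) = n * (n - 1) := by
  have by_fst := card_eq_sum_card_fiberwise (s := ascendingPairs n) (t := univ) (f := Prod.fst)
    fun _ _ => mem_univ _
  have by_snd := card_eq_sum_card_fiberwise (s := ascendingPairs n) (t := univ) (f := Prod.snd)
    fun _ _ => mem_univ _
  have hm (m : Fin n) : ((n - 1 - m : ℕ) : ℤ) + m = n - 1 := by have := m.isLt; omega
  rw [two_mul]
  nth_rewrite 1 [by_fst]
  rw [by_snd]
  simp only [card_ascendingPairs_filter_fst, card_ascendingPairs_filter_snd]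
  push_cast
  simp only [← sum_add_distrib, hm, sum_sub_distrib, sum_const, Finset.card_fin, nsmul_eq_mul,
    mul_one]
  ring

theorem three_mul_sum_sq_sub_two_mul :
    3 * ∑ m : Fin n, ((n : ℤ) - 1 - 2 * m) ^ 2 = (n : ℤ) * (n ^ 2 - 1) := by
  rw [Fin.sum_univ_eq_sum_range (fun m => ((n : ℤ) - 1 - 2 * m) ^ 2),
    three_mul_sum_range_sub_two_mul_sq]
  ring

theorem kendallS_eq_sum_pairSign (σ : Perm (Fin n)) :
    kendallS n σ =
      ∑ p ∈ ascendingPairs n, pairSign (fun k : Fin n => (k : ℤ)) σ p.1 p.2 :=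
  rfl

theorem sum_kendallS : ∑ σ, kendallS n σ = 0 := by
  simp only [kendallS_eq_sum_pairSign]
  rw [sum_comm]
  exact sum_eq_zero fun p _ => sum_pairSign_eq_zero _ p.1 p.2

theorem sum_kendallS_sq :
    ∑ σ, kendallS n σ ^ 2 = ∑ p ∈ ascendingPairs n, ∑ q ∈ ascendingPairs n,
      pairSignMoment (fun k : Fin n => (k : ℤ)) p.1 p.2 q.1 q.2 := by
  simp only [kendallS_eq_sum_pairSign, sq, sum_mul_sum, pairSignMoment]
  rw [sum_comm]
  exact sum_congr rfl fun p _ => sum_comm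

theorem three_mul_pairSignMoment_ascendingPairs {p q : Fin n × Fin n} (hp : p ∈ ascendingPairs n)
    (hq : q ∈ ascendingPairs n) :
    3 * pairSignMoment (fun k : Fin n => (k : ℤ)) p.1 p.2 q.1 q.2 =
      n ! * (∑ m, incidence p.1 p.2 m * incidence q.1 q.2 m + if p = q then 1 else 0) := by
  simp only [ascendingPairs, mem_filter, mem_univ, true_and] at hp hq
  have hinj : Injective fun k : Fin n => (k : ℤ) := fun a b h => by simpa [Fin.ext_iff] using h
  rw [three_mul_pairSignMoment hinj hp.ne hq.ne, sum_incidence_mul_incidence, Fintype.card_fin]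
  have hrev : (p.1, p.2) ≠ (q.2, q.1) := fun h => by
    simp only [Prod.mk.injEq] at h
    exact absurd (h.1 ▸ h.2 ▸ hp) (lt_asymm hq)
  simp [hrev]

theorem sum_sum_incidence_add_ite :
    ∑ p ∈ ascendingPairs n, ∑ q ∈ ascendingPairs n,
        (∑ m, incidence p.1 p.2 m * incidence q.1 q.2 m + if p = q then 1 else 0) =
      ∑ m : Fin n, ((n : ℤ) - 1 - 2 * m) ^ 2 + #(ascendingPairs n) := by
  simp only [sum_add_distrib, ← sum_ascendingPairs_incidence, sq, sum_mul_sum, sum_ite_eq]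
  congr 1
  · rw [sum_congr rfl fun p _ => sum_comm]
    exact sum_comm
  · simp

theorem eighteen_mul_sum_kendallS_sq :
    18 * ∑ σ, kendallS n σ ^ 2 = n ! * (n * (n - 1) * (2 * n + 5)) := by
  have h : 3 * ∑ σ, kendallS n σ ^ 2 =
      n ! * (∑ m : Fin n, ((n : ℤ) - 1 - 2 * m) ^ 2 + #(ascendingPairs n)) := by
    rw [← sum_sum_incidence_add_ite, sum_kendallS_sq, mul_sum, mul_sum]
    refine sum_congr rfl fun p hp => ?_
    rw [mul_sum, mul_sum]
    exact sum_congr rfl fun q hq => three_mul_pairSignMoment_ascendingPairs hp hq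
  linear_combination 6 * h + 2 * (n ! : ℤ) * three_mul_sum_sq_sub_two_mul (n := n)
    + 3 * (n ! : ℤ) * two_mul_card_ascendingPairs (n := n)

end Kendall

/-- Variance of Kendall's `S` (and `τ`) under the null hypothesis: for a uniformly random
permutation `σ` of `{1,…,n}` (`n ≥ 2`), `Var S = n(n-1)(2n+5)/18`, equivalently
`Var τ = 2(2n+5)/(9 n (n-1))` for `τ = S / (n(n-1)/2)`. -/
theorem kendall_S_variance {n : ℕ} (hn : 2 ≤ n) :
    ((Nat.factorial n : ℚ))⁻¹ *
          (∑ σ : Equiv.Perm (Fin n), ((kendallS n σ : ℚ)) ^ 2) -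
        (((Nat.factorial n : ℚ))⁻¹ * ∑ σ : Equiv.Perm (Fin n), (kendallS n σ : ℚ)) ^ 2 =
      n * (n - 1) * (2 * n + 5) / 18 ∧
    ((Nat.factorial n : ℚ))⁻¹ *
          (∑ σ : Equiv.Perm (Fin n), ((kendallS n σ : ℚ) / (n * (n - 1) / 2)) ^ 2) -
        (((Nat.factorial n : ℚ))⁻¹ *
            ∑ σ : Equiv.Perm (Fin n), (kendallS n σ : ℚ) / (n * (n - 1) / 2)) ^ 2 =
      2 * (2 * n + 5) / (9 * n * (n - 1)) := by
  have hmean : ∑ σ, (kendallS n σ : ℚ) = 0 := by exact_mod_cast sum_kendallS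
  have hsq : 18 * ∑ σ, (kendallS n σ : ℚ) ^ 2 = n ! * (n * (n - 1) * (2 * n + 5)) := by
    exact_mod_cast eighteen_mul_sum_kendallS_sq
  have hn1 : (n : ℚ) - 1 ≠ 0 := sub_ne_zero.mpr (by exact_mod_cast (by omega : n ≠ 1))
  simp only [div_pow, ← sum_div, hmean]
  constructor <;> field_simp <;> linear_combination (n ! : ℚ) * hsq
end

section
/- Ryser's formula: for an n×n matrix A over a commutative ring, per(A) = (−1)^n · Σ_{S ⊆ {1,…,n}} (−1)^{|S|} · Π_{i=1}^n (Σ_{j ∈ S} a_{ij}). -/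
open Matrix Finset

/-!
Expanding `∏ i, ∑ j ∈ T, A i j` gives the sum of `∏ i, A i (f i)` over all maps `f` with range in
`T`, while the permanent is the same sum over the surjective maps `f : ι → ι`. Inclusion–exclusion
over the columns `j` missed by `f` expresses the latter as the alternating sum of the former.
-/

namespace Matrix

variable {ι R : Type*} [Fintype ι] [DecidableEq ι]

def mapsAvoiding (j : ι) : Finset (ι → ι) := {f | ∀ i, f i ≠ j}

lemma inf_compl_mapsAvoiding :
    (univ.inf fun j ↦ (mapsAvoiding j)ᶜ) = ({f | Function.Surjective f} : Finset (ι → ι)) := by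
  ext f
  simp only [mem_inf, mem_univ, forall_const, mem_compl, mapsAvoiding, mem_filter, true_and,
    not_forall, not_not]
  rfl

lemma inf_mapsAvoiding (t : Finset ι) : t.inf mapsAvoiding = Fintype.piFinset fun _ ↦ tᶜ := by
  ext f
  simp only [mem_inf, mapsAvoiding, mem_filter, mem_univ, true_and, Fintype.mem_piFinset,
    mem_compl]
  grind

lemma sum_filter_surjective_eq_sum_perm {M : Type*} [AddCommMonoid M] (g : (ι → ι) → M) :
    ∑ f with Function.Surjective f, g f = ∑ σ : Equiv.Perm ι, g σ :=
  sum_bij' (fun f hf ↦ .ofBijective f (Finite.surjective_iff_bijective.mp (mem_filter.mp hf).2))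
    (fun σ _ ↦ σ) (by simp) (fun σ _ ↦ by simpa using σ.surjective) (by simp) (by simp) (by simp)

lemma permanent_eq_sum_prod_apply [CommSemiring R] (A : Matrix ι ι R) :
    A.permanent = ∑ σ : Equiv.Perm ι, ∏ i, A i (σ i) := by
  rw [← permanent_transpose]
  rfl

theorem permanent_eq_sum_neg_one_pow_mul_prod_sum_compl [CommRing R] (A : Matrix ι ι R) :
    A.permanent = ∑ T : Finset ι, (-1) ^ #T * ∏ i, ∑ j ∈ Tᶜ, A i j := by
  rw [permanent_eq_sum_prod_apply, ← sum_filter_surjective_eq_sum_perm fun f ↦ ∏ i, A i (f i),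
    ← inf_compl_mapsAvoiding, inclusion_exclusion_sum_inf_compl]
  refine sum_congr powerset_univ fun T _ ↦ ?_
  rw [inf_mapsAvoiding, prod_univ_sum (f := fun i j ↦ A i j), zsmul_eq_mul, Int.cast_pow,
    Int.cast_neg, Int.cast_one]

lemma neg_one_pow_card_compl [Monoid R] [HasDistribNeg R] (S : Finset ι) :
    (-1 : R) ^ #Sᶜ = (-1) ^ Fintype.card ι * (-1) ^ #S := by
  rw [← card_compl_add_card S, pow_add, mul_assoc, ← pow_add, ← two_mul, pow_mul, neg_one_sq,
    one_pow, mul_one]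

theorem permanent_eq_neg_one_pow_card_mul_sum [CommRing R] (A : Matrix ι ι R) :
    A.permanent =
      (-1) ^ Fintype.card ι * ∑ S : Finset ι, (-1) ^ #S * ∏ i, ∑ j ∈ S, A i j := by
  rw [permanent_eq_sum_neg_one_pow_mul_prod_sum_compl, mul_sum,
    ← Equiv.sum_comp compl_involutive.toPerm]
  refine sum_congr rfl fun S _ ↦ ?_
  rw [Function.Involutive.coe_toPerm, compl_compl, neg_one_pow_card_compl, mul_assoc]

end Matrix

/-- Ryser's formula:
`per A = (-1)^n ∑_{S ⊆ {1,…,n}} (-1)^{|S|} ∏ i (∑_{j ∈ S} A i j)`. -/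
theorem ryser_formula {n : ℕ} {R : Type*} [CommRing R] (A : Matrix (Fin n) (Fin n) R) :
    A.permanent =
      (-1) ^ n *
        ∑ S : Finset (Fin n), (-1) ^ S.card * ∏ i, ∑ j ∈ S, A i j := by
  simpa using A.permanent_eq_neg_one_pow_card_mul_sum
end
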